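/- For all w, r, s ∈ ℕ there exists u ∈ Δ^w_{r+s} such that |A_r(u)| = μ(w,r,s) and for all 1 ≤ i < j ≤ w+1 it holds that |u(i) − u(j)| < 2. -/
import Mathlib


open scoped BigOperators Classical
open Filter

namespace TandemDup

variable {S : Type} [Fintype S] [DecidableEq S] [Ring S]

/-- A single tandem duplication with window length `k`:
`a = xyz` with `|y| = k` is mapped to `b = xyyz`. -/
def Dup (k : ℕ) (a b : List S) : Prop :=
  ∃ x y z : List S, y.length = k ∧ a = x ++ y ++ z ∧ b = x ++ y ++ y ++ z

/-- `DescN k t x y` : `y` is a `t`-descendant of `x`. -/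
def DescN (k : ℕ) : ℕ → List S → List S → Prop
  | 0, a, b => a = b
  | t + 1, a, b => ∃ c, DescN k t a c ∧ Dup k c b

/-- The set `D^t(x)` of `t`-descendants of `x`. -/
def DSet (k t : ℕ) (x : List S) : Set (List S) := {y | DescN k t x y}

/-- The descendant cone `D^*(x)`. -/
def DStar (k : ℕ) (x : List S) : Set (List S) := ⋃ t : ℕ, DSet k t x

/-- A string of length at least `k` is irreducible if it has no ancestor other than itself. -/
def Irred (k : ℕ) (x : List S) : Prop :=
  k ≤ x.length ∧ ∀ z : List S, x ∈ DStar k z → z = x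

/-- The duplication root `rt(y)`: an irreducible ancestor of `y` (unique, by the theory). -/
noncomputable def rt (k : ℕ) (y : List S) : List S :=
  if h : ∃ x : List S, Irred k x ∧ y ∈ DStar k x then h.choose else y

/-- The (non-anchor part of the) discrete derivative `φ̄(x)`. -/
def phiBar (k : ℕ) (x : List S) : List S :=
  (List.range (x.length - k)).map (fun i => x.getD (i + k) 0 - x.getD i 0)

/-- Hamming weight of a string: the number of its nonzero letters. -/
def wtH (l : List S) : ℕ := (l.filter (fun a => decide (a ≠ 0))).length

/-- `w(x) := wt_H(φ̄(x))`. -/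
def wgt (k : ℕ) (x : List S) : ℕ := wtH (phiBar k x)

/-- `r(x) := (|x| - |rt(x)|)/k`, the number of duplications taking `rt(x)` to `x`. -/
noncomputable def rr (k : ℕ) (x : List S) : ℕ := (x.length - (rt k x).length) / k

/-- The typicality condition on the weight `w`. -/
def wTypical (q k n w : ℕ) : Prop :=
  |(w : ℝ) - (((q : ℝ) - 1) / (q : ℝ)) * ((n : ℝ) - (k : ℝ))| < (n : ℝ) ^ ((3 : ℝ) / 4)

/-- The typicality condition on the number of duplications `r`. -/
def rTypical (q k n r : ℕ) : Prop :=
  |(r : ℝ) - (((q : ℝ) - 1) / ((q : ℝ) * ((q : ℝ) ^ k - 1))) * ((n : ℝ) - (k : ℝ))|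
    < 2 * (n : ℝ) ^ ((3 : ℝ) / 4)

/-- The typical set `typ^n`. -/
def typ (k n : ℕ) : Set (List S) :=
  {x | x.length = n ∧ wTypical (Fintype.card S) k n (wgt k x) ∧
    rTypical (Fintype.card S) k n (rr k x)}

/-- The uncertainty `N_t(m, C)`: the maximal size of `⋂ᵢ D^t(xᵢ)` over pairwise
distinct `x₁, …, x_m ∈ C`. -/
noncomputable def Nt (k t m : ℕ) (C : Set (List S)) : ℕ :=
  sSup { N : ℕ | ∃ f : Fin m → List S, Function.Injective f ∧ (∀ i, f i ∈ C) ∧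
    N = (⋂ i, DSet k t (f i)).ncard }

/-- `S̄_t(u₁, …, u_m) = ⋂ᵢ {v : v ≥ uᵢ, ‖v - uᵢ‖₁ = t}`. -/
def Sbar (w t : ℕ) {m : ℕ} (u : Fin m → (Fin (w + 1) → ℕ)) : Set (Fin (w + 1) → ℕ) :=
  ⋂ i, {v | u i ≤ v ∧ ∑ j, (v j - u i j) = t}

/-- `N̄_t(m, w, r)`. -/
noncomputable def Nbar (t m w r : ℕ) : ℕ :=
  sSup { N : ℕ | ∃ u : Fin m → (Fin (w + 1) → ℕ), Function.Injective u ∧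
    (∀ i, ∑ j, u i j = r) ∧ N = (Sbar w t u).ncard }

/-- The minimum supremum height `σ(m, w, r)`. -/
noncomputable def sigma (m w r : ℕ) : ℕ :=
  sInf { s : ℕ | ∃ u : Fin m → (Fin (w + 1) → ℕ), Function.Injective u ∧
    (∀ i, ∑ j, u i j = r) ∧ (∑ j, Finset.univ.sup fun i => u i j) = r + s }

/-- The lower-bounds set `A_r(u)`. -/
def lbs (w r : ℕ) (u : Fin (w + 1) → ℕ) : Set (Fin (w + 1) → ℕ) :=
  {v | (∑ j, v j) = r ∧ v ≤ u}

/-- The maximal lower-bounds-set size `μ(w, r, s)`. -/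
noncomputable def mu (w r s : ℕ) : ℕ :=
  sSup { N : ℕ | ∃ u : Fin (w + 1) → ℕ, (∑ j, u j) = r + s ∧ N = (lbs w r u).ncard }

/-- Twice the distance `d₁`, i.e. the `ℓ₁`-distance `‖u - v‖₁` on `ℕ^{w+1}`. -/
def l1dist {w : ℕ} (u v : Fin (w + 1) → ℕ) : ℕ :=
  ∑ j, ((u j - v j) + (v j - u j))

/-- `N̄_t(m, w, r, d)`. -/
noncomputable def NbarD (t m w r d : ℕ) : ℕ :=
  sSup { N : ℕ | ∃ u : Fin m → (Fin (w + 1) → ℕ),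
    (∀ i, ∑ j, u i j = r) ∧ (∀ i j, i ≠ j → 2 * d ≤ l1dist (u i) (u j)) ∧
    N = (Sbar w t u).ncard }

/-- `σ(m, w, r, d)`. -/
noncomputable def sigmaD (m w r d : ℕ) : ℕ :=
  sInf { s : ℕ | ∃ u : Fin m → (Fin (w + 1) → ℕ),
    (∀ i, ∑ j, u i j = r) ∧ (∀ i j, i ≠ j → 2 * d ≤ l1dist (u i) (u j)) ∧
    (∑ j, Finset.univ.sup fun i => u i j) = r + s }

/-- `μ(w, r, s, d)`. -/
noncomputable def muD (w r s d : ℕ) : ℕ :=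
  sSup { N : ℕ | ∃ u : Fin (w + 1) → ℕ, (∑ j, u j) = r + s ∧
    ∃ C : Set (Fin (w + 1) → ℕ), C ⊆ lbs w r u ∧
      (∀ v₁ ∈ C, ∀ v₂ ∈ C, v₁ ≠ v₂ → 2 * d ≤ l1dist v₁ v₂) ∧ N = C.ncard }

/-- The duplication distance `d(y₁, y₂)`. -/
noncomputable def distDup (k : ℕ) (y₁ y₂ : List S) : ℕ :=
  sInf {t : ℕ | (DSet k t y₁ ∩ DSet k t y₂).Nonempty}

/-- `N^typ_t(m, n, d)`. -/
noncomputable def NtypD (k t m n d : ℕ) : ℕ :=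
  sSup { N : ℕ | ∃ f : Fin m → List S, (∀ i, f i ∈ typ k n) ∧
    (∀ i j, i ≠ j → d ≤ distDup k (f i) (f j)) ∧
    N = (⋂ i, DSet k t (f i)).ncard }

/-- `A(ν, D, ω)`: the maximum size of a binary code of length `ν`, constant Hamming
weight `ω`, and minimum Hamming distance `D`. -/
noncomputable def Abin (ν D ω : ℕ) : ℕ :=
  sSup { N : ℕ | ∃ C : Set (Fin ν → ZMod 2), (∀ x ∈ C, hammingNorm x = ω) ∧
    (∀ x ∈ C, ∀ y ∈ C, x ≠ y → D ≤ hammingDist x y) ∧ N = C.ncard }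

/-- Zero-run-length representation: `ψ_x(y)` as a list, mapping `φ̄(y)` written as
`0^{u(1)} a₁ 0^{u(2)} … a_w 0^{u(w+1)}` (with the `aᵢ` nonzero) to
`(⌊u(1)/k⌋, …, ⌊u(w+1)/k⌋)`. -/
def psiList (k : ℕ) (y : List S) : List ℕ :=
  ((phiBar k y).splitOnP (fun a => decide (a ≠ 0))).map (fun run => run.length / k)

/-- `ψ_x(y)` as a vector in `ℕ^{w+1}`. -/
def psiVec (k w : ℕ) (y : List S) : Fin (w + 1) → ℕ := fun i => (psiList k y).getD i 0

/-- `s = ⌈log_n m⌉`. -/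
noncomputable def sExp (n m : ℕ) : ℕ := ⌈Real.logb n m⌉₊

/-- The indicator `δ(m, n)` of Theorem 17. -/
noncomputable def deltaTyp (q k n m : ℕ) : ℕ :=
  if ∀ r : ℕ, rTypical q k n r → Nat.choose (r + sExp n m) r < m then 1 else 0

/-- `s = ⌈log_n m⌉ + d - 1`. -/
noncomputable def sExpD (n m d : ℕ) : ℕ := sExp n m + (d - 1)

/-- The indicator `δ(m, n, d)` of Theorem 29. -/
noncomputable def deltaEcc (q k d n m : ℕ) : ℕ :=
  if ∀ r : ℕ, rTypical q k n r → Abin (r + sExpD n m d) (2 * d) (sExpD n m d) < m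
  then 1 else 0


section Aux8

variable {w r s : ℕ}

lemma lbs_finite (u : Fin (w + 1) → ℕ) : (lbs w r u).Finite := by
  apply (Set.Finite.pi fun t => Set.finite_Iic (u t)).subset
  intro v hv
  simp only [Set.mem_pi, Set.mem_univ, Set.mem_Iic, forall_true_left]
  exact fun t => hv.2 t

lemma lbs_ncard_le (u : Fin (w + 1) → ℕ) (hu : (∑ j, u j) = r + s) :
    (lbs w r u).ncard ≤ (Set.pi Set.univ fun _ : Fin (w + 1) => Set.Iic (r + s)).ncard := by
  apply Set.ncard_le_ncard _ (Set.Finite.pi fun _ => Set.finite_Iic (r + s))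
  intro v hv
  simp only [Set.mem_pi, Set.mem_univ, Set.mem_Iic, forall_true_left]
  intro t
  calc v t ≤ u t := hv.2 t
    _ ≤ ∑ j, u j := Finset.single_le_sum (fun _ _ => Nat.zero_le _) (Finset.mem_univ t)
    _ = r + s := hu

lemma mu_bddAbove :
    BddAbove { N : ℕ | ∃ u : Fin (w + 1) → ℕ, (∑ j, u j) = r + s ∧ N = (lbs w r u).ncard } := by
  refine ⟨(Set.pi Set.univ fun _ : Fin (w + 1) => Set.Iic (r + s)).ncard, ?_⟩
  rintro N ⟨u, hu, rfl⟩
  exact lbs_ncard_le u hu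

lemma mu_nonempty :
    { N : ℕ | ∃ u : Fin (w + 1) → ℕ, (∑ j, u j) = r + s ∧ N = (lbs w r u).ncard }.Nonempty := by
  refine ⟨(lbs w r (fun t => if t = 0 then r + s else 0)).ncard,
    fun t => if t = 0 then r + s else 0, ?_, rfl⟩
  simp

lemma ncard_le_mu (u : Fin (w + 1) → ℕ) (hu : (∑ j, u j) = r + s) :
    (lbs w r u).ncard ≤ mu w r s :=
  le_csSup mu_bddAbove ⟨u, hu, rfl⟩

lemma mu_attained :
    ∃ u : Fin (w + 1) → ℕ, (∑ j, u j) = r + s ∧ (lbs w r u).ncard = mu w r s := by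
  have := Nat.sSup_mem (mu_nonempty (w := w) (r := r) (s := s)) mu_bddAbove
  obtain ⟨u, hu, h⟩ := this
  exact ⟨u, hu, h.symm⟩

lemma sum_split {i j : Fin (w + 1)} (hij : i ≠ j) (f : Fin (w + 1) → ℕ) :
    ∑ t, f t = f i + f j + ∑ t ∈ Finset.univ \ {i, j}, f t := by
  rw [← Finset.sum_sdiff (Finset.subset_univ {i, j}), Finset.sum_pair hij]
  ring

lemma upd2_at_i {i j : Fin (w + 1)} (hij : i ≠ j) (v : Fin (w + 1) → ℕ) (a b : ℕ) :
    Function.update (Function.update v i a) j b i = a := by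
  rw [Function.update_of_ne hij, Function.update_self]

lemma upd2_at_j {i j : Fin (w + 1)} (v : Fin (w + 1) → ℕ) (a b : ℕ) :
    Function.update (Function.update v i a) j b j = b := by
  rw [Function.update_self]

lemma upd2_at_other {i j t : Fin (w + 1)} (hti : t ≠ i) (htj : t ≠ j)
    (v : Fin (w + 1) → ℕ) (a b : ℕ) :
    Function.update (Function.update v i a) j b t = v t := by
  rw [Function.update_of_ne htj, Function.update_of_ne hti]

lemma sum_upd2 {i j : Fin (w + 1)} (hij : i ≠ j) (v : Fin (w + 1) → ℕ) (a b : ℕ) :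
    ∑ t, Function.update (Function.update v i a) j b t =
      a + b + ∑ t ∈ Finset.univ \ {i, j}, v t := by
  rw [sum_split hij, upd2_at_i hij, upd2_at_j]
  congr 1
  refine Finset.sum_congr rfl fun t ht => ?_
  simp only [Finset.mem_sdiff, Finset.mem_insert, Finset.mem_singleton, not_or] at ht
  exact upd2_at_other ht.2.1 ht.2.2 v a b

/-- The key exchange lemma: moving one unit from a coordinate that is at least two
larger to a smaller one does not decrease the size of the lower-bounds set. -/
lemma exchange_ncard_le (u : Fin (w + 1) → ℕ) {i j : Fin (w + 1)} (hij : i ≠ j)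
    (h2 : u j + 2 ≤ u i) :
    (lbs w r u).ncard ≤
      (lbs w r (Function.update (Function.update u i (u i - 1)) j (u j + 1))).ncard := by
  set u' := Function.update (Function.update u i (u i - 1)) j (u j + 1) with hu'
  clear_value u'
  have hu'i : u' i = u i - 1 := by rw [hu', upd2_at_i hij]
  have hu'j : u' j = u j + 1 := by rw [hu', upd2_at_j]
  have hu'o : ∀ t, t ≠ i → t ≠ j → u' t = u t := by
    intro t hti htj; rw [hu', upd2_at_other hti htj]
  set f : (Fin (w + 1) → ℕ) → (Fin (w + 1) → ℕ) := fun v =>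
    if u i ≤ v i + v j then Function.update (Function.update v i (v i - 1)) j (v j + 1) else v
    with hf
  clear_value f
  have hfpos : ∀ v : Fin (w + 1) → ℕ, u i ≤ v i + v j →
      f v = Function.update (Function.update v i (v i - 1)) j (v j + 1) := by
    intro v h; simp only [hf, if_pos h]
  have hfneg : ∀ v : Fin (w + 1) → ℕ, ¬ u i ≤ v i + v j → f v = v := by
    intro v h; simp only [hf, if_neg h]
  apply Set.ncard_le_ncard_of_injOn f _ _ (lbs_finite u')
  · -- maps to
    rintro v ⟨hvs, hvle⟩
    by_cases hc : u i ≤ v i + v j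
    · have hvj : v j ≤ u j := hvle j
      have hvii : v i ≤ u i := hvle i
      have hvi1 : 1 ≤ v i := by omega
      rw [hfpos v hc]
      constructor
      · rw [sum_upd2 hij]
        rw [sum_split hij v] at hvs
        omega
      · intro t
        rcases eq_or_ne t j with rfl | htj
        · rw [upd2_at_j, hu'j]; exact Nat.succ_le_succ hvj
        · rcases eq_or_ne t i with rfl | hti
          · rw [upd2_at_i hij, hu'i]; exact Nat.sub_le_sub_right (hvle t) 1
          · rw [upd2_at_other hti htj, hu'o t hti htj]; exact hvle t
    · rw [hfneg v hc]
      refine ⟨hvs, fun t => ?_⟩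
      have hvj : v j ≤ u j := hvle j
      rcases eq_or_ne t j with rfl | htj
      · rw [hu'j]; exact hvj.trans (Nat.le_succ _)
      · rcases eq_or_ne t i with rfl | hti
        · rw [hu'i]
          exact Nat.le_pred_of_lt (lt_of_le_of_lt (Nat.le_add_right _ _) (Nat.lt_of_not_le hc))
        · rw [hu'o t hti htj]; exact hvle t
  · -- injective on lbs
    intro v1 hv1 v2 hv2 heq
    have hb1 : v1 j ≤ u j := hv1.2 j
    have hb2 : v2 j ≤ u j := hv2.2 j
    have hsum1 : f v1 i + f v1 j = v1 i + v1 j := by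
      by_cases hc : u i ≤ v1 i + v1 j
      · rw [hfpos v1 hc, upd2_at_i hij, upd2_at_j]
        omega
      · rw [hfneg v1 hc]
    have hsum2 : f v2 i + f v2 j = v2 i + v2 j := by
      by_cases hc : u i ≤ v2 i + v2 j
      · rw [hfpos v2 hc, upd2_at_i hij, upd2_at_j]
        omega
      · rw [hfneg v2 hc]
    have hsums : v1 i + v1 j = v2 i + v2 j := by
      rw [← hsum1, ← hsum2, heq]
    by_cases hc : u i ≤ v1 i + v1 j
    · have hc2 : u i ≤ v2 i + v2 j := by omega
      have hvi1 : 1 ≤ v1 i := by omega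
      have hvi2 : 1 ≤ v2 i := by omega
      rw [hfpos v1 hc, hfpos v2 hc2] at heq
      funext t
      have ht := congrFun heq t
      rcases eq_or_ne t j with rfl | htj
      · rw [upd2_at_j, upd2_at_j] at ht; omega
      · rcases eq_or_ne t i with rfl | hti
        · rw [upd2_at_i hij, upd2_at_i hij] at ht; omega
        · rwa [upd2_at_other hti htj, upd2_at_other hti htj] at ht
    · have hc2 : ¬ u i ≤ v2 i + v2 j := by omega
      rw [hfneg v1 hc, hfneg v2 hc2] at heq
      exact heq

end Aux8

theorem statement8 (w r s : ℕ) :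
    ∃ u : Fin (w + 1) → ℕ, (∑ j, u j) = r + s ∧
      (lbs w r u).ncard = mu w r s ∧
      ∀ i j : Fin (w + 1), i ≠ j → |(u i : ℤ) - (u j : ℤ)| < 2 := by
  classical
  -- the set of potentials of maximizers
  set Q : Set ℕ := { n | ∃ u : Fin (w + 1) → ℕ, (∑ j, u j) = r + s ∧
      (lbs w r u).ncard = mu w r s ∧ (∑ t, (u t) ^ 2) = n } with hQ
  have hQne : Q.Nonempty := by
    obtain ⟨u0, hs0, hc0⟩ := mu_attained (w := w) (r := r) (s := s)
    exact ⟨∑ t, (u0 t) ^ 2, u0, hs0, hc0, rfl⟩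
  obtain ⟨u, husum, hucard, huphi⟩ := Nat.sInf_mem hQne
  refine ⟨u, husum, hucard, ?_⟩
  have key : ∀ i j : Fin (w + 1), i ≠ j → u i < u j + 2 := by
    intro i j hij
    by_contra hc
    push_neg at hc
    have h2 : u j + 2 ≤ u i := hc
    set u' := Function.update (Function.update u i (u i - 1)) j (u j + 1) with hu'
    clear_value u'
    have hu'i : u' i = u i - 1 := by rw [hu', upd2_at_i hij]
    have hu'j : u' j = u j + 1 := by rw [hu', upd2_at_j]
    have hu'o : ∀ t, t ≠ i → t ≠ j → u' t = u t := by
      intro t hti htj; rw [hu', upd2_at_other hti htj]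
    have hoth1 : ∑ t ∈ Finset.univ \ {i, j}, u' t = ∑ t ∈ Finset.univ \ {i, j}, u t := by
      refine Finset.sum_congr rfl fun t ht => ?_
      simp only [Finset.mem_sdiff, Finset.mem_insert, Finset.mem_singleton, not_or] at ht
      exact hu'o t ht.2.1 ht.2.2
    have hoth2 : ∑ t ∈ Finset.univ \ {i, j}, (u' t) ^ 2 =
        ∑ t ∈ Finset.univ \ {i, j}, (u t) ^ 2 := by
      refine Finset.sum_congr rfl fun t ht => ?_
      simp only [Finset.mem_sdiff, Finset.mem_insert, Finset.mem_singleton, not_or] at ht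
      rw [hu'o t ht.2.1 ht.2.2]
    have eu : (∑ t, u t) = u i + u j + ∑ t ∈ Finset.univ \ {i, j}, u t := sum_split hij _
    have eu' : (∑ t, u' t) = u' i + u' j + ∑ t ∈ Finset.univ \ {i, j}, u' t := sum_split hij _
    have equ : (∑ t, (u t) ^ 2) =
        (u i) ^ 2 + (u j) ^ 2 + ∑ t ∈ Finset.univ \ {i, j}, (u t) ^ 2 := sum_split hij _
    have equ' : (∑ t, (u' t) ^ 2) =
        (u' i) ^ 2 + (u' j) ^ 2 + ∑ t ∈ Finset.univ \ {i, j}, (u' t) ^ 2 := sum_split hij _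
    -- u' still sums to r + s
    have hsum' : (∑ t, u' t) = r + s := by
      rw [eu', hu'i, hu'j, hoth1]
      rw [eu] at husum
      omega
    -- u' is still a maximizer
    have hcard' : (lbs w r u').ncard = mu w r s := by
      refine le_antisymm (ncard_le_mu u' hsum') ?_
      rw [← hucard, hu']
      exact exchange_ncard_le u hij h2
    -- but has strictly smaller potential
    have hphi : (∑ t, (u' t) ^ 2) < ∑ t, (u t) ^ 2 := by
      rw [equ', equ, hu'i, hu'j, hoth2]
      have hlt : (u i - 1) ^ 2 + (u j + 1) ^ 2 < (u i) ^ 2 + (u j) ^ 2 := by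
        obtain ⟨c, hcc⟩ : ∃ c, u i = u j + 2 + c := ⟨u i - (u j + 2), by omega⟩
        rw [hcc]
        have h3 : u j + 2 + c - 1 = u j + 1 + c := by omega
        rw [h3]
        nlinarith
      omega
    have : sInf Q ≤ ∑ t, (u' t) ^ 2 := Nat.sInf_le ⟨u', hsum', hcard', rfl⟩
    omega
  intro i j hij
  have h1 := key i j hij
  have h2 := key j i hij.symm
  rw [abs_lt]
  constructor <;> omega

end TandemDup
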